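/- If K ⊆ Σ^{≤ω} is a language of finite and infinite words whose right congruence (u ~ u' iff for all x ∈ Σ^{≤ω}, ux ∈ K ⟺ u'x ∈ K) has finite index, and K' is obtained from K by complementation, union with a regular language, or inverse image under a homomorphism h : Γ^{≤ω} → Σ^{≤ω} induced by a letter map Γ → Σ*, then K' also has a finite-index right congruence. -/

import Mathlib

open Filter

variable {A : Type*}

/-- The interval coded by `p` occupies positions `p.1, …, p.1 + p.2 - 1` (length `p.2 > 0`). -/
def IntervalLt (p q : ℕ × ℕ) : Prop := p.1 + p.2 ≤ q.1

def IntervalDisj (p q : ℕ × ℕ) : Prop := p.1 + p.2 ≤ q.1 ∨ q.1 + q.2 ≤ p.1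

def prefixList (u : ℕ → List A) (m : ℕ) : List A := (List.range m).flatMap u

/-- Prepending a finite word to an ω-word. -/
def prepend (w : List A) (x : ℕ → A) : ℕ → A := fun n =>
  if h : n < w.length then w.get ⟨n, h⟩ else x (n - w.length)

open Classical in
/-- The infinite concatenation `u 0 · u 1 · u 2 ⋯` of a sequence of finite words, as an
ω-word; meaningful when infinitely many of the `u i` are nonempty. -/
noncomputable def omegaConcat [Inhabited A] (u : ℕ → List A) : ℕ → A := fun n =>
  if h : ∃ m, n < (prefixList u m).length
  then (prefixList u (Nat.find h)).getD n default
  else default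

/-- The ω-power `v^ω` of a finite word; meaningful when `v ≠ []`. -/
noncomputable def omegaPow [Inhabited A] (v : List A) : ℕ → A := fun n =>
  v.getD (n % v.length) default

/-- Infinitely many of the words `u i` are nonempty. -/
def InfOftenNonempty (u : ℕ → List A) : Prop := ∀ n, ∃ m, n ≤ m ∧ u m ≠ []

/-- A relation on finite words has finite index (finitely many classes). -/
def FiniteIndex (r : List A → List A → Prop) : Prop :=
  (Set.range fun w => {v | r w v}).Finite

/-- Compatibility with concatenation. -/
def ConcatCongr (r : List A → List A → Prop) : Prop :=
  ∀ u₁ u₁' u₂ u₂' : List A, r u₁ u₁' → r u₂ u₂' → r (u₁ ++ u₂) (u₁' ++ u₂')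

/-- The relation `r` recognizes `L`: relating the blocks of two infinite concatenations
pointwise preserves membership in `L`. -/
def Recognizes [Inhabited A] (r : List A → List A → Prop) (L : Set (ℕ → A)) : Prop :=
  ∀ u u' : ℕ → List A, InfOftenNonempty u → InfOftenNonempty u' →
    (∀ i, r (u i) (u' i)) → (omegaConcat u ∈ L ↔ omegaConcat u' ∈ L)

/-- Nondeterministic Büchi automaton. -/
structure BuchiAutomaton (A : Type*) where
  Q : Type
  finQ : Finite Q
  init : Set Q
  step : Q → A → Set Q
  acc : Set Q

def BuchiAutomaton.Accepts (M : BuchiAutomaton A) (x : ℕ → A) : Prop :=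
  ∃ ρ : ℕ → M.Q, ρ 0 ∈ M.init ∧ (∀ n, ρ (n + 1) ∈ M.step (ρ n) (x n)) ∧
    ∀ n, ∃ m, n ≤ m ∧ ρ m ∈ M.acc

def OmegaRegular (L : Set (ℕ → A)) : Prop :=
  ∃ M : BuchiAutomaton A, ∀ x, x ∈ L ↔ M.Accepts x

/-- ω-words over `{a, b}` (with `a = true`, `b = false`) of the form `a^{k₁} b a^{k₂} b ⋯`
whose blocks of `a`'s have unbounded size. -/
def Uset : Set (ℕ → Bool) :=
  {x | (∀ n, ∃ m, n ≤ m ∧ x m = false) ∧ ∀ n, ∃ k, ∀ i < n, x (k + i) = true}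

/-- Words of length at most ω: finite words or ω-words. -/
def WordLE (A : Type*) := List A ⊕ (ℕ → A)

/-- Prepending a finite word to a word of length `≤ ω`. -/
def appendLE (u : List A) : WordLE A → WordLE A
  | .inl w => .inl (u ++ w)
  | .inr x => .inr (prepend u x)

/-- The right congruence of a language of words of length `≤ ω`. -/
def RightEqLE (K : Set (WordLE A)) (u u' : List A) : Prop :=
  ∀ x : WordLE A, appendLE u x ∈ K ↔ appendLE u' x ∈ K

/-- Regular languages of words of length `≤ ω`: a regular language of finite words
together with an ω-regular language. -/
def RegularLE (R : Set (WordLE A)) : Prop :=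
  ∃ (Rfin : Language A) (Romega : Set (ℕ → A)),
    Rfin.IsRegular ∧ OmegaRegular Romega ∧
    R = Sum.inl '' (Rfin : Set (List A)) ∪ Sum.inr '' Romega

open Classical in
/-- The homomorphism of words of length `≤ ω` induced by the letter map `h : Γ → Σ*`.
The image of an ω-word is an ω-word if infinitely many letters have nonempty image,
and a finite word otherwise. -/
noncomputable def homExt {Γ : Type*} [Inhabited A] (h : Γ → List A) :
    WordLE Γ → WordLE A
  | .inl w => .inl (w.flatMap h)
  | .inr x =>
    if hc : InfOftenNonempty (fun i => h (x i)) then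
      .inr (omegaConcat (fun i => h (x i)))
    else
      .inl (prefixList (fun i => h (x i))
        (Classical.choose (show ∃ n, ∀ m, n ≤ m → h (x m) = [] by
          simpa [InfOftenNonempty, not_forall] using hc)))

/-!
Complementation does not change the right congruence, and `u ∼_K u'`, `u ∼_R u'` together give
`u ∼_{K ∪ R} u'`. For regular `R`, `∼_R` is refined by "same state of a DFA for the finite words
of `R` and same set of states reachable in a Büchi automaton for its ω-words", which has finite
index. For a homomorphism, `h (u x) = h(u) h(x)` for every `x` of length `≤ ω`, so `h u ∼_K h u'`
implies `u ∼_{h⁻¹ K} u'`.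
-/

@[simp]
lemma prepend_nil (x : ℕ → A) : prepend [] x = x := by
  funext n
  simp [prepend]

lemma prepend_of_lt (w : List A) (x : ℕ → A) {n : ℕ} (hn : n < w.length) :
    prepend w x n = w[n] := by
  simp [prepend, hn]

lemma prepend_of_le (w : List A) (x : ℕ → A) {n : ℕ} (hn : w.length ≤ n) :
    prepend w x n = x (n - w.length) := by
  simp [prepend, Nat.not_lt.mpr hn]

@[simp]
lemma prepend_length_add (w : List A) (x : ℕ → A) (n : ℕ) :
    prepend w x (w.length + n) = x n := by
  simp [prepend]

@[simp]
lemma prepend_cons_zero (a : A) (w : List A) (x : ℕ → A) : prepend (a :: w) x 0 = a := by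
  simp [prepend]

@[simp]
lemma prepend_cons_succ (a : A) (w : List A) (x : ℕ → A) (n : ℕ) :
    prepend (a :: w) x (n + 1) = prepend w x n := by
  by_cases hn : n < w.length
  · simp [prepend, hn]
  · simp [prepend, hn, Nat.add_sub_add_right]

lemma map_prepend {B : Type*} (f : A → B) (w : List A) (x : ℕ → A) :
    (fun n => f (prepend w x n)) = prepend (w.map f) fun n => f (x n) := by
  funext n
  by_cases hn : n < w.length <;> simp [prepend, hn]

lemma prefixList_succ (u : ℕ → List A) (m : ℕ) :
    prefixList u (m + 1) = prefixList u m ++ u m := by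
  simp [prefixList, List.range_succ]

lemma prefixList_add (u : ℕ → List A) (k m : ℕ) :
    prefixList u (k + m) = prefixList u k ++ prefixList (fun i => u (k + i)) m := by
  induction m with
  | zero => simp [prefixList]
  | succ m ih => rw [← Nat.add_assoc, prefixList_succ, ih, prefixList_succ, List.append_assoc]

lemma prefixList_prefix_of_le (u : ℕ → List A) {m m' : ℕ} (h : m ≤ m') :
    prefixList u m <+: prefixList u m' := by
  obtain ⟨k, rfl⟩ := Nat.exists_eq_add_of_le h
  rw [prefixList_add]
  exact List.prefix_append _ _

lemma prefixList_prepend_length (ws : List (List A)) (v : ℕ → List A) :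
    prefixList (prepend ws v) ws.length = ws.flatten := by
  rw [prefixList, List.flatMap_def]
  congr 1
  apply List.ext_getElem (by simp)
  intro n _ hn
  simp [prepend_of_lt _ _ hn]

lemma prefixList_prepend_length_add (ws : List (List A)) (v : ℕ → List A) (m : ℕ) :
    prefixList (prepend ws v) (ws.length + m) = ws.flatten ++ prefixList v m := by
  simp only [prefixList_add, prefixList_prepend_length, prepend_length_add]

lemma prefixList_eq_of_forall_nil {u : ℕ → List A} {N : ℕ} (hN : ∀ m, N ≤ m → u m = [])
    {M : ℕ} (hM : N ≤ M) : prefixList u M = prefixList u N := by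
  obtain ⟨k, rfl⟩ := Nat.exists_eq_add_of_le hM
  induction k with
  | zero => rfl
  | succ k ih =>
    rw [← Nat.add_assoc, prefixList_succ, hN _ (by omega), List.append_nil, ih (by omega)]

lemma infOftenNonempty_iff_frequently (u : ℕ → List A) :
    InfOftenNonempty u ↔ ∃ᶠ n in atTop, u n ≠ [] :=
  frequently_atTop.symm

lemma infOftenNonempty_prepend_iff (ws : List (List A)) (v : ℕ → List A) :
    InfOftenNonempty (prepend ws v) ↔ InfOftenNonempty v := by
  rw [infOftenNonempty_iff_frequently, infOftenNonempty_iff_frequently]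
  conv_lhs => rw [← map_add_atTop_eq_nat ws.length, frequently_map]
  simp only [add_comm _ ws.length, prepend_length_add]

lemma not_infOftenNonempty_iff {u : ℕ → List A} :
    ¬ InfOftenNonempty u ↔ ∃ N, ∀ m, N ≤ m → u m = [] := by
  simp [InfOftenNonempty, not_forall]

lemma InfOftenNonempty.exists_lt_length_prefixList {u : ℕ → List A} (hu : InfOftenNonempty u)
    (n : ℕ) : ∃ m, n < (prefixList u m).length := by
  have grow : ∀ m, ∃ m', (prefixList u m).length < (prefixList u m').length := by
    intro m
    obtain ⟨m', hmm', hne⟩ := hu m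
    refine ⟨m' + 1, ?_⟩
    have := (prefixList_prefix_of_le u hmm').length_le
    have := List.length_pos_iff.mpr hne
    rw [prefixList_succ, List.length_append]
    omega
  induction n with
  | zero => simpa [prefixList] using grow 0
  | succ n ih =>
    obtain ⟨m, hm⟩ := ih
    obtain ⟨m', hm'⟩ := grow m
    exact ⟨m', by omega⟩

section Homomorphism

variable [Inhabited A]

lemma omegaConcat_eq_getD (u : ℕ → List A) {m n : ℕ} (hn : n < (prefixList u m).length) :
    omegaConcat u n = (prefixList u m).getD n default := by
  have hex : ∃ m, n < (prefixList u m).length := ⟨m, hn⟩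
  have hfind : n < (prefixList u (Nat.find hex)).length := Nat.find_spec hex
  rw [omegaConcat, dif_pos hex, List.getD_eq_getElem _ _ hfind, List.getD_eq_getElem _ _ hn]
  exact (prefixList_prefix_of_le u (Nat.find_min' hex hn)).getElem hfind

lemma omegaConcat_prepend (ws : List (List A)) {v : ℕ → List A} (hv : InfOftenNonempty v) :
    omegaConcat (prepend ws v) = prepend ws.flatten (omegaConcat v) := by
  funext n
  obtain ⟨m, hm⟩ := hv.exists_lt_length_prefixList (n - ws.flatten.length)
  have hn : n < (prefixList (prepend ws v) (ws.length + m)).length := by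
    rw [prefixList_prepend_length_add, List.length_append]
    omega
  rw [omegaConcat_eq_getD _ hn, prefixList_prepend_length_add]
  by_cases hw : n < ws.flatten.length
  · rw [prepend_of_lt _ _ hw, List.getD_append _ _ _ _ hw, List.getD_eq_getElem]
  · rw [prepend_of_le _ _ (by omega), List.getD_append_right _ _ _ _ (by omega),
      ← omegaConcat_eq_getD _ hm]

variable {Γ : Type*} (h : Γ → List A)

lemma homExt_inr_of_infOftenNonempty {x : ℕ → Γ} (hx : InfOftenNonempty fun i => h (x i)) :
    homExt h (.inr x) = .inr (omegaConcat fun i => h (x i)) :=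
  dif_pos hx

lemma homExt_inr_of_forall_nil {x : ℕ → Γ} {N : ℕ} (hN : ∀ m, N ≤ m → h (x m) = []) :
    homExt h (.inr x) = .inl (prefixList (fun i => h (x i)) N) := by
  have hx : ¬ InfOftenNonempty fun i => h (x i) := not_infOftenNonempty_iff.mpr ⟨N, hN⟩
  have hN' := Classical.choose_spec (not_infOftenNonempty_iff.mp hx)
  refine (dif_neg hx).trans ?_
  rw [← prefixList_eq_of_forall_nil hN' (le_max_left _ N),
    ← prefixList_eq_of_forall_nil hN (le_max_right _ N)]

lemma homExt_appendLE (u : List Γ) (x : WordLE Γ) :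
    homExt h (appendLE u x) = appendLE (u.flatMap h) (homExt h x) := by
  rcases x with w | y
  · exact congrArg Sum.inl List.flatMap_append
  have hmap : (fun i => h (prepend u y i)) = prepend (u.map h) fun i => h (y i) := map_prepend h u y
  by_cases hy : InfOftenNonempty fun i => h (y i)
  · have huy : InfOftenNonempty fun i => h (prepend u y i) := by
      rwa [hmap, infOftenNonempty_prepend_iff]
    rw [appendLE, homExt_inr_of_infOftenNonempty h huy, homExt_inr_of_infOftenNonempty h hy, hmap,
      omegaConcat_prepend _ hy, List.flatMap_def]
    rfl
  · obtain ⟨N, hN⟩ := not_infOftenNonempty_iff.mp hy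
    have huN : ∀ m, (u.map h).length + N ≤ m → h (prepend u y m) = [] := by
      intro m hm
      obtain ⟨k, rfl⟩ := Nat.exists_eq_add_of_le hm
      rw [congrFun hmap, Nat.add_assoc, prepend_length_add]
      exact hN _ (Nat.le_add_right N k)
    rw [appendLE, homExt_inr_of_forall_nil h huN, homExt_inr_of_forall_nil h hN, hmap,
      prefixList_prepend_length_add, List.flatMap_def]
    rfl

end Homomorphism

namespace BuchiAutomaton

variable (M : BuchiAutomaton A)

def toNFA : NFA A M.Q := ⟨M.step, M.init, M.acc⟩

def AcceptsFrom (S : Set M.Q) (x : ℕ → A) : Prop :=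
  ∃ ρ : ℕ → M.Q, ρ 0 ∈ S ∧ (∀ n, ρ (n + 1) ∈ M.step (ρ n) (x n)) ∧
    ∀ n, ∃ m, n ≤ m ∧ ρ m ∈ M.acc

lemma acceptsFrom_iff_tail (S : Set M.Q) (x : ℕ → A) :
    M.AcceptsFrom S x ↔ M.AcceptsFrom (M.toNFA.stepSet S (x 0)) fun n => x (n + 1) := by
  constructor
  · rintro ⟨ρ, h0, hstep, hacc⟩
    refine ⟨fun n => ρ (n + 1), NFA.mem_stepSet.mpr ⟨ρ 0, h0, hstep 0⟩, fun n => hstep (n + 1),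
      fun n => ?_⟩
    obtain ⟨m, hm, hmem⟩ := hacc (n + 1)
    obtain ⟨k, rfl⟩ : ∃ k, m = k + 1 := ⟨m - 1, by omega⟩
    exact ⟨k, by omega, hmem⟩
  · rintro ⟨ρ, h0, hstep, hacc⟩
    obtain ⟨p, hp, hp0⟩ := NFA.mem_stepSet.mp h0
    refine ⟨fun n => Nat.casesOn n p ρ, hp, ?_, fun n => ?_⟩
    · rintro (_ | n)
      exacts [hp0, hstep n]
    · obtain ⟨m, hm, hmem⟩ := hacc n
      exact ⟨m + 1, by omega, hmem⟩

lemma acceptsFrom_prepend (S : Set M.Q) (u : List A) (y : ℕ → A) :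
    M.AcceptsFrom S (prepend u y) ↔ M.AcceptsFrom (M.toNFA.evalFrom S u) y := by
  induction u generalizing S with
  | nil => simp
  | cons a u ih =>
    simp only [acceptsFrom_iff_tail M S, prepend_cons_zero, prepend_cons_succ, ih,
      NFA.evalFrom_cons]

lemma accepts_prepend (u : List A) (y : ℕ → A) :
    M.Accepts (prepend u y) ↔ M.AcceptsFrom (M.toNFA.evalFrom M.init u) y :=
  M.acceptsFrom_prepend M.init u y

end BuchiAutomaton

lemma FiniteIndex.of_map {r : List A → List A → Prop} (hr : Equivalence r) {β : Type*}
    (f : List A → β) (hf : (Set.range f).Finite) (hfr : ∀ u v, f u = f v → r u v) :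
    FiniteIndex r := by
  refine (hf.image fun b => {v | ∃ u, f u = b ∧ r u v}).subset ?_
  rintro _ ⟨w, rfl⟩
  refine ⟨f w, ⟨w, rfl⟩, ?_⟩
  ext v
  exact ⟨fun ⟨u, hu, huv⟩ => hr.trans (hfr w u hu.symm) huv, fun hwv => ⟨w, rfl, hwv⟩⟩

lemma rightEqLE_equivalence (K : Set (WordLE A)) : Equivalence (RightEqLE K) :=
  ⟨fun _ _ => Iff.rfl, fun h x => (h x).symm, fun h g x => (h x).trans (g x)⟩

lemma rightEqLE_of_setOf_eq {K : Set (WordLE A)} {u v : List A}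
    (h : {w | RightEqLE K u w} = {w | RightEqLE K v w}) : RightEqLE K u v := by
  show v ∈ {w | RightEqLE K u w}
  rw [h]
  exact (rightEqLE_equivalence K).refl v

lemma rightEqLE_compl (K : Set (WordLE A)) : RightEqLE Kᶜ = RightEqLE K := by
  funext u v
  simp only [RightEqLE, Set.mem_compl_iff, not_iff_not]

lemma RightEqLE.union {K R : Set (WordLE A)} {u v : List A} (hK : RightEqLE K u v)
    (hR : RightEqLE R u v) : RightEqLE (K ∪ R) u v :=
  fun x => or_congr (hK x) (hR x)

lemma FiniteIndex.rightEqLE_union {K R : Set (WordLE A)} (hK : FiniteIndex (RightEqLE K))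
    (hR : FiniteIndex (RightEqLE R)) : FiniteIndex (RightEqLE (K ∪ R)) := by
  refine .of_map (rightEqLE_equivalence _)
    (fun u => ({w | RightEqLE K u w}, {w | RightEqLE R u w})) ((hK.prod hR).subset ?_)
    fun u v huv => ?_
  · rintro _ ⟨u, rfl⟩
    exact ⟨⟨u, rfl⟩, ⟨u, rfl⟩⟩
  · obtain ⟨hKuv, hRuv⟩ := Prod.ext_iff.mp huv
    exact (rightEqLE_of_setOf_eq hKuv).union (rightEqLE_of_setOf_eq hRuv)

lemma rightEqLE_image_inl {L : Set (List A)} {u v : List A}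
    (h : ∀ w, u ++ w ∈ L ↔ v ++ w ∈ L) : RightEqLE (Sum.inl '' L : Set (WordLE A)) u v := by
  rintro (w | y)
  · exact Sum.inl_injective.mem_set_image.trans ((h w).trans Sum.inl_injective.mem_set_image.symm)
  · exact iff_of_false (by rintro ⟨_, _, ⟨⟩⟩) (by rintro ⟨_, _, ⟨⟩⟩)

lemma rightEqLE_image_inr {W : Set (ℕ → A)} {u v : List A}
    (h : ∀ y, prepend u y ∈ W ↔ prepend v y ∈ W) :
    RightEqLE (Sum.inr '' W : Set (WordLE A)) u v := by
  rintro (w | y)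
  · exact iff_of_false (by rintro ⟨_, _, ⟨⟩⟩) (by rintro ⟨_, _, ⟨⟩⟩)
  · exact Sum.inr_injective.mem_set_image.trans ((h y).trans Sum.inr_injective.mem_set_image.symm)

lemma Language.IsRegular.finiteIndex_rightEqLE_image_inl {L : Language A} (hL : L.IsRegular) :
    FiniteIndex (RightEqLE (Sum.inl '' (L : Set (List A)) : Set (WordLE A))) := by
  obtain ⟨σ, _, D, rfl⟩ := hL
  refine .of_map (rightEqLE_equivalence _) D.eval (Set.toFinite _) fun u v huv => ?_
  refine rightEqLE_image_inl fun w => ?_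
  change D.evalFrom D.start (u ++ w) ∈ D.accept ↔ D.evalFrom D.start (v ++ w) ∈ D.accept
  rw [DFA.evalFrom_of_append, DFA.evalFrom_of_append]
  exact Iff.of_eq (congrArg (fun s => D.evalFrom s w ∈ D.accept) huv)

lemma OmegaRegular.finiteIndex_rightEqLE_image_inr {W : Set (ℕ → A)} (hW : OmegaRegular W) :
    FiniteIndex (RightEqLE (Sum.inr '' W : Set (WordLE A))) := by
  obtain ⟨M, hM⟩ := hW
  have := M.finQ
  refine .of_map (rightEqLE_equivalence _) (M.toNFA.evalFrom M.init) (Set.toFinite _)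
    fun u v huv => rightEqLE_image_inr fun y => ?_
  rw [hM, hM, M.accepts_prepend, M.accepts_prepend, huv]

lemma RegularLE.finiteIndex_rightEqLE {R : Set (WordLE A)} (hR : RegularLE R) :
    FiniteIndex (RightEqLE R) := by
  obtain ⟨L, W, hL, hW, rfl⟩ := hR
  exact hL.finiteIndex_rightEqLE_image_inl.rightEqLE_union hW.finiteIndex_rightEqLE_image_inr

lemma FiniteIndex.rightEqLE_preimage_homExt [Inhabited A] {K : Set (WordLE A)}
    (hK : FiniteIndex (RightEqLE K)) {Γ : Type*} (h : Γ → List A) :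
    FiniteIndex (RightEqLE (homExt h ⁻¹' K)) := by
  refine .of_map (rightEqLE_equivalence _) (fun u => {w | RightEqLE K (u.flatMap h) w})
    (hK.subset ?_) fun u v huv x => ?_
  · rintro _ ⟨u, rfl⟩
    exact ⟨u.flatMap h, rfl⟩
  · simp only [Set.mem_preimage, homExt_appendLE]
    exact rightEqLE_of_setOf_eq huv (homExt h x)

/-- Finite index of the right congruence is preserved by complementation, union with a
regular language, and inverse images of homomorphisms. -/
theorem statement19 [Inhabited A] (K : Set (WordLE A))
    (hK : FiniteIndex (RightEqLE K)) :
    FiniteIndex (RightEqLE Kᶜ) ∧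
    (∀ R : Set (WordLE A), RegularLE R → FiniteIndex (RightEqLE (K ∪ R))) ∧
    (∀ (Γ : Type) (h : Γ → List A), FiniteIndex (RightEqLE (homExt h ⁻¹' K))) :=
  ⟨rightEqLE_compl K ▸ hK, fun _ hR => hK.rightEqLE_union hR.finiteIndex_rightEqLE,
    fun _ h => hK.rightEqLE_preimage_homExt h⟩
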